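/- arXiv:2603.21373 — 2 statements merged into one kernel-verified Lean document; each statement's English description precedes it below -/
import Mathlib

section
/- Non-density of single Plackett–Luce for n ≥ 3: for n = 3, there exists a probability distribution p on S_3 and ε > 0 such that for all θ ∈ ℝ^3, the ℓ1 distance ∑_{π∈S_3} |PL(π|θ) − p(π)| ≥ ε; concretely, one may take p to be the uniform distribution on the two permutations (1,2,3) and (3,2,1) and ε = 1/6, i.e. no single PL distribution comes within ℓ1 distance 1/6 of p. -/
/-- Plackett-Luce probability of the ordering π given logits θ. -/
noncomputable def PL {n : ℕ} (θ : Fin n → ℝ) (π : Equiv.Perm (Fin n)) : ℝ :=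
  ∏ r : Fin n, Real.exp (θ (π r)) / ∑ j ∈ Finset.Ici r, Real.exp (θ (π j))

/-- The uniform distribution on the identity and the reversal of Fin 3. -/
noncomputable def pTarget (π : Equiv.Perm (Fin 3)) : ℝ :=
  if π = 1 then 1 / 2 else if π = Equiv.swap 0 2 then 1 / 2 else 0

lemma PL_id (θ : Fin 3 → ℝ) :
    PL θ 1 = Real.exp (θ 0) / (Real.exp (θ 0) + Real.exp (θ 1) + Real.exp (θ 2))
      * (Real.exp (θ 1) / (Real.exp (θ 1) + Real.exp (θ 2)))
      * (Real.exp (θ 2) / Real.exp (θ 2)) := by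
  unfold PL
  rw [Fin.prod_univ_three]
  have h0 : Finset.Ici (0 : Fin 3) = {0, 1, 2} := by decide
  have h1 : Finset.Ici (1 : Fin 3) = {1, 2} := by decide
  have h2 : Finset.Ici (2 : Fin 3) = {2} := by decide
  rw [h0, h1, h2]
  simp only [Finset.sum_insert (by decide : (0:Fin 3) ∉ ({1,2}:Finset (Fin 3)))]
  simp only [Finset.sum_insert (by decide : (1:Fin 3) ∉ ({2}:Finset (Fin 3))),
    Finset.sum_singleton, Equiv.Perm.one_apply]
  ring

lemma PL_rev (θ : Fin 3 → ℝ) :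
    PL θ (Equiv.swap 0 2) = Real.exp (θ 2) / (Real.exp (θ 0) + Real.exp (θ 1) + Real.exp (θ 2))
      * (Real.exp (θ 1) / (Real.exp (θ 1) + Real.exp (θ 0)))
      * (Real.exp (θ 0) / Real.exp (θ 0)) := by
  unfold PL
  rw [Fin.prod_univ_three]
  have h0 : Finset.Ici (0 : Fin 3) = {0, 1, 2} := by decide
  have h1 : Finset.Ici (1 : Fin 3) = {1, 2} := by decide
  have h2 : Finset.Ici (2 : Fin 3) = {2} := by decide
  have s0 : Equiv.swap (0 : Fin 3) 2 0 = 2 := by decide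
  have s1 : Equiv.swap (0 : Fin 3) 2 1 = 1 := by decide
  have s2 : Equiv.swap (0 : Fin 3) 2 2 = 0 := by decide
  rw [h0, h1, h2]
  simp only [Finset.sum_insert (by decide : (0:Fin 3) ∉ ({1,2}:Finset (Fin 3)))]
  simp only [Finset.sum_insert (by decide : (1:Fin 3) ∉ ({2}:Finset (Fin 3))),
    Finset.sum_singleton, s0, s1, s2]
  ring

lemma PL_key (θ : Fin 3 → ℝ) : PL θ 1 ≤ 1/3 ∨ PL θ (Equiv.swap 0 2) ≤ 1/3 := by
  by_contra h
  push_neg at h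
  obtain ⟨hx, hy⟩ := h
  set a := Real.exp (θ 0) with ha'
  set b := Real.exp (θ 1) with hb'
  set c := Real.exp (θ 2) with hc'
  have ha : 0 < a := Real.exp_pos _
  have hb : 0 < b := Real.exp_pos _
  have hc : 0 < c := Real.exp_pos _
  rw [PL_id θ] at hx
  rw [PL_rev θ] at hy
  rw [div_self (ne_of_gt hc)] at hx
  rw [div_self (ne_of_gt ha)] at hy
  have hS : 0 < a + b + c := by linarith
  have hbc : 0 < b + c := by linarith
  have hab : 0 < b + a := by linarith
  rw [mul_one, div_mul_div_comm] at hx hy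
  rw [lt_div_iff₀ (by positivity)] at hx hy
  nlinarith [sq_nonneg (a - b), sq_nonneg (b - c), mul_pos (mul_pos ha hb) (mul_pos hb hc),
    mul_pos hS hbc, mul_pos hS hab, sq_nonneg ((a+b)*(b+c)),
    mul_le_mul_of_nonneg_right
      (mul_le_mul (by linarith : a + b ≤ a + b + c) (by linarith : b + c ≤ a + b + c)
        (by linarith) (by linarith))
      (le_of_lt (mul_pos (by linarith : (0:ℝ) < a + b) hbc)),
    mul_le_mul (by nlinarith [sq_nonneg (a-b)] : 4*(a*b) ≤ (a+b)^2)
      (by nlinarith [sq_nonneg (b-c)] : 4*(b*c) ≤ (b+c)^2)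
      (by positivity) (by positivity)]

/-- Non-density of the single-PL family for n = 3: the uniform distribution on
the identity permutation (1,2,3) and the reversal (3,2,1) cannot be approximated
within ℓ1 distance 1/6 by any single PL distribution. -/
theorem PL_not_dense_three :
    ∀ θ : Fin 3 → ℝ, 1 / 6 ≤ ∑ π : Equiv.Perm (Fin 3), |PL θ π - pTarget π| := by
  intro θ
  have hne : (1 : Equiv.Perm (Fin 3)) ≠ Equiv.swap 0 2 := by decide
  have hp1 : pTarget 1 = 1/2 := by norm_num [pTarget]
  have hp2 : pTarget (Equiv.swap 0 2) = 1/2 := by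
    rw [pTarget, if_neg (Ne.symm hne), if_pos rfl]
  have hstep : 1/6 ≤ |PL θ 1 - pTarget 1| + |PL θ (Equiv.swap 0 2) - pTarget (Equiv.swap 0 2)| := by
    rw [hp1, hp2]
    rcases PL_key θ with h | h
    · have := neg_abs_le (PL θ 1 - 1/2)
      have := abs_nonneg (PL θ (Equiv.swap 0 2) - 1/2)
      linarith
    · have := neg_abs_le (PL θ (Equiv.swap 0 2) - 1/2)
      have := abs_nonneg (PL θ 1 - 1/2)
      linarith
  calc 1/6 ≤ |PL θ 1 - pTarget 1| + |PL θ (Equiv.swap 0 2) - pTarget (Equiv.swap 0 2)| := hstep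
    _ = ∑ π ∈ ({1, Equiv.swap 0 2} : Finset (Equiv.Perm (Fin 3))), |PL θ π - pTarget π| :=
        by rw [Finset.sum_pair hne]
    _ ≤ ∑ π : Equiv.Perm (Fin 3), |PL θ π - pTarget π| :=
        Finset.sum_le_sum_of_subset_of_nonneg (Finset.subset_univ _)
          (fun i _ _ => abs_nonneg _)
end

section
/- Density of mixtures of Plackett–Luce: for any probability distribution p on the symmetric group S_n and any ε > 0, there exist K ≤ n!, nonnegative weights α_1,…,α_K summing to 1, and logit vectors θ^(1),…,θ^(K) ∈ ℝ^n such that the mixture q(π) = ∑_k α_k PL(π|θ^(k)) satisfies ∑_{π∈S_n} |q(π) − p(π)| < ε. -/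
set_option maxHeartbeats 1000000


open Filter Finset

lemma denom_pos {n : ℕ} (θ : Fin n → ℝ) (τ : Equiv.Perm (Fin n)) (r : Fin n) :
    0 < ∑ j ∈ Finset.Ici r, Real.exp (θ (τ j)) :=
  Finset.sum_pos (fun _ _ => Real.exp_pos _) ⟨r, Finset.mem_Ici.mpr le_rfl⟩

lemma factor_nonneg {n : ℕ} (θ : Fin n → ℝ) (τ : Equiv.Perm (Fin n)) (r : Fin n) :
    0 ≤ Real.exp (θ (τ r)) / ∑ j ∈ Finset.Ici r, Real.exp (θ (τ j)) :=
  div_nonneg (Real.exp_pos _).le (denom_pos θ τ r).le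

lemma factor_le_one {n : ℕ} (θ : Fin n → ℝ) (τ : Equiv.Perm (Fin n)) (r : Fin n) :
    Real.exp (θ (τ r)) / (∑ j ∈ Finset.Ici r, Real.exp (θ (τ j))) ≤ 1 := by
  rw [div_le_one (denom_pos θ τ r)]
  exact Finset.single_le_sum (f := fun j => Real.exp (θ (τ j)))
    (fun _ _ => (Real.exp_pos _).le) (Finset.mem_Ici.mpr le_rfl)

lemma PL_le_factor {n : ℕ} (θ : Fin n → ℝ) (τ : Equiv.Perm (Fin n)) (r₀ : Fin n) :
    PL θ τ ≤ Real.exp (θ (τ r₀)) / ∑ j ∈ Finset.Ici r₀, Real.exp (θ (τ j)) := by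
  unfold PL
  rw [← Finset.mul_prod_erase Finset.univ _ (Finset.mem_univ r₀)]
  exact mul_le_of_le_one_right (factor_nonneg _ τ r₀)
    (Finset.prod_le_one (fun r _ => factor_nonneg _ τ r)
      (fun r _ => factor_le_one _ τ r))

lemma PL_nonneg {n : ℕ} (θ : Fin n → ℝ) (τ : Equiv.Perm (Fin n)) : 0 ≤ PL θ τ :=
  Finset.prod_nonneg fun r _ => factor_nonneg θ τ r

lemma key {n : ℕ} (σ : Equiv.Perm (Fin n)) (ε : ℝ) (hε : 0 < ε) :
    ∃ θ : Fin n → ℝ,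
      ∑ τ : Equiv.Perm (Fin n), |PL θ τ - (if τ = σ then 1 else 0)| < ε := by
  set c : Fin n → ℝ := fun i => -((σ.symm i : ℕ) : ℝ) with hc
  have hT : Tendsto
      (fun M : ℝ => ∑ τ : Equiv.Perm (Fin n),
        |PL (fun i => M * c i) τ - (if τ = σ then 1 else 0)|) atTop (nhds 0) := by
    have h0 : (0 : ℝ) = ∑ _τ : Equiv.Perm (Fin n), (0 : ℝ) := by simp
    rw [h0]
    apply tendsto_finset_sum
    intro τ _
    have hPL : Tendsto (fun M : ℝ => PL (fun i => M * c i) τ) atTop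
        (nhds (if τ = σ then 1 else 0)) := by
      by_cases hτ : τ = σ
      · subst hτ
        simp only [if_pos rfl]
        have hEq : ∀ M : ℝ, PL (fun i => M * c i) τ =
            ∏ r : Fin n, (∑ j ∈ Finset.Ici r, Real.exp (M * (c (τ j) - c (τ r))))⁻¹ := by
          intro M
          unfold PL
          refine Finset.prod_congr rfl fun r _ => ?_
          show Real.exp (M * c (τ r)) / (∑ j ∈ Finset.Ici r, Real.exp (M * c (τ j)))
              = (∑ j ∈ Finset.Ici r, Real.exp (M * (c (τ j) - c (τ r))))⁻¹
          have hS : ∑ j ∈ Finset.Ici r, Real.exp (M * c (τ j))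
              = Real.exp (M * c (τ r)) *
                ∑ j ∈ Finset.Ici r, Real.exp (M * (c (τ j) - c (τ r))) := by
            rw [Finset.mul_sum]
            refine Finset.sum_congr rfl fun j _ => ?_
            rw [← Real.exp_add]
            ring_nf
          rw [hS, div_mul_cancel_left₀ (Real.exp_ne_zero _)]
        have h1 : Tendsto
            (fun M : ℝ => ∏ r : Fin n,
              (∑ j ∈ Finset.Ici r, Real.exp (M * (c (τ j) - c (τ r))))⁻¹) atTop (nhds 1) := by
          have h1' : (1 : ℝ) = ∏ _r : Fin n, (1 : ℝ) := by simp
          rw [h1']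
          apply tendsto_finset_prod
          intro r _
          have hsum : Tendsto
              (fun M : ℝ => ∑ j ∈ Finset.Ici r, Real.exp (M * (c (τ j) - c (τ r))))
              atTop (nhds 1) := by
            have h1'' : (1 : ℝ) = ∑ j ∈ Finset.Ici r, (if j = r then (1:ℝ) else 0) := by simp
            rw [h1'']
            apply tendsto_finset_sum
            intro j hj
            by_cases hjr : j = r
            · subst hjr
              simp
            · simp only [if_neg hjr]
              have hneg : c (τ j) - c (τ r) < 0 := by
                have hrj : (r : ℕ) < (j : ℕ) :=
                  Fin.lt_iff_val_lt_val.mp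
                    (lt_of_le_of_ne (Finset.mem_Ici.mp hj) (Ne.symm hjr))
                have hcast : ((r : ℕ) : ℝ) < ((j : ℕ) : ℝ) := Nat.cast_lt.mpr hrj
                simp only [hc, Equiv.symm_apply_apply]
                linarith
              exact Real.tendsto_exp_atBot.comp (tendsto_id.atTop_mul_const_of_neg hneg)
          have := hsum.inv₀ one_ne_zero
          simpa using this
        exact h1.congr (fun M => (hEq M).symm)
      · simp only [if_neg hτ]
        have hne : (Finset.univ.filter (fun r => τ r ≠ σ r)).Nonempty := by
          by_contra h
          apply hτ
          apply Equiv.ext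
          intro x
          by_contra hx
          exact h ⟨x, Finset.mem_filter.mpr ⟨Finset.mem_univ x, hx⟩⟩
        set r₀ : Fin n := (Finset.univ.filter (fun r => τ r ≠ σ r)).min' hne with hr₀def
        have hr₀ : τ r₀ ≠ σ r₀ :=
          (Finset.mem_filter.mp ((Finset.univ.filter (fun r => τ r ≠ σ r)).min'_mem hne)).2
        have hmin : ∀ s : Fin n, s < r₀ → τ s = σ s := by
          intro s hs
          by_contra h
          exact absurd (Finset.min'_le _ s (Finset.mem_filter.mpr ⟨Finset.mem_univ s, h⟩))
            (not_le.mpr hs)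
        have h1 : r₀ < σ.symm (τ r₀) := by
          rcases lt_trichotomy (σ.symm (τ r₀)) r₀ with h | h | h
          · have h3 : τ (σ.symm (τ r₀)) = τ r₀ :=
              (hmin _ h).trans (Equiv.apply_symm_apply σ _)
            exact absurd (τ.injective h3) (ne_of_lt h)
          · exact absurd ((Equiv.symm_apply_eq σ).mp h) hr₀
          · exact h
        have h2 : r₀ ≤ τ.symm (σ r₀) := by
          by_contra h
          push_neg at h
          have h3 : σ (τ.symm (σ r₀)) = σ r₀ :=
            (hmin _ h).symm.trans (Equiv.apply_symm_apply τ _)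
          exact absurd (σ.injective h3) (ne_of_lt h)
        have hbound : ∀ M : ℝ, 0 ≤ M → PL (fun i => M * c i) τ ≤ Real.exp (-M) := by
          intro M hM
          have hden : Real.exp (M * c (σ r₀)) ≤
              ∑ j ∈ Finset.Ici r₀, Real.exp (M * c (τ j)) := by
            have hmem : τ.symm (σ r₀) ∈ Finset.Ici r₀ := Finset.mem_Ici.mpr h2
            have := Finset.single_le_sum (f := fun j => Real.exp (M * c (τ j)))
              (fun j _ => (Real.exp_pos _).le) hmem
            simpa using this
          have hfac : Real.exp (M * c (τ r₀)) /
              (∑ j ∈ Finset.Ici r₀, Real.exp (M * c (τ j))) ≤ Real.exp (-M) := by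
            calc Real.exp (M * c (τ r₀)) / (∑ j ∈ Finset.Ici r₀, Real.exp (M * c (τ j)))
                ≤ Real.exp (M * c (τ r₀)) / Real.exp (M * c (σ r₀)) :=
                  div_le_div_of_nonneg_left (Real.exp_pos _).le (Real.exp_pos _) hden
              _ = Real.exp (M * c (τ r₀) - M * c (σ r₀)) := (Real.exp_sub _ _).symm
              _ ≤ Real.exp (-M) := by
                  apply Real.exp_le_exp.mpr
                  have hcle : c (τ r₀) - c (σ r₀) ≤ -1 := by
                    have hlt : ((r₀ : ℕ) : ℝ) + 1 ≤ ((σ.symm (τ r₀) : ℕ) : ℝ) := by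
                      have := Fin.lt_iff_val_lt_val.mp h1
                      exact_mod_cast this
                    simp only [hc, Equiv.symm_apply_apply]
                    linarith
                  nlinarith
          exact (PL_le_factor (fun i => M * c i) τ r₀).trans hfac
        refine squeeze_zero' (Filter.Eventually.of_forall fun M => PL_nonneg _ τ) ?_
          Real.tendsto_exp_neg_atTop_nhds_zero
        filter_upwards [eventually_ge_atTop (0:ℝ)] with M hM
        exact hbound M hM
    have habs := (hPL.sub (tendsto_const_nhds : Tendsto _ atTop
        (nhds (if τ = σ then (1:ℝ) else 0)))).abs
    simpa using habs
  have hev : ∀ᶠ M : ℝ in atTop,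
      (∑ τ : Equiv.Perm (Fin n),
        |PL (fun i => M * c i) τ - (if τ = σ then 1 else 0)|) < ε :=
    hT.eventually_lt_const hε
  obtain ⟨M, hM⟩ := hev.exists
  exact ⟨fun i => M * c i, hM⟩

/-- Density of mixtures of Plackett–Luce distributions in the set of all
distributions on the symmetric group, in ℓ1 distance. -/
theorem PL_mixture_dense (n : ℕ) (p : Equiv.Perm (Fin n) → ℝ)
    (hp : ∀ π, 0 ≤ p π) (hsum : ∑ π : Equiv.Perm (Fin n), p π = 1)
    (ε : ℝ) (hε : 0 < ε) :
    ∃ (K : ℕ) (_ : K ≤ Nat.factorial n) (α : Fin K → ℝ) (θ : Fin K → Fin n → ℝ),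
      (∀ k, 0 ≤ α k) ∧ (∑ k, α k = 1) ∧
      (∑ π : Equiv.Perm (Fin n), |(∑ k, α k * PL (θ k) π) - p π| < ε) := by
  classical
  have hcard : Fintype.card (Equiv.Perm (Fin n)) = Nat.factorial n := by
    simp [Fintype.card_perm, Fintype.card_fin]
  let e : Fin (Nat.factorial n) ≃ Equiv.Perm (Fin n) :=
    (Fintype.equivFinOfCardEq hcard).symm
  choose θf hθf using fun σ : Equiv.Perm (Fin n) => key σ (ε/2) (half_pos hε)
  refine ⟨Nat.factorial n, le_rfl, fun k => p (e k), fun k => θf (e k),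
    fun k => hp _, ?_, ?_⟩
  · rw [← hsum]; exact Equiv.sum_comp e p
  · have hpτ : ∀ τ : Equiv.Perm (Fin n),
        p τ = ∑ k, p (e k) * (if τ = e k then 1 else 0) := by
      intro τ
      have : ∀ k : Fin (Nat.factorial n),
          p (e k) * (if τ = e k then 1 else 0)
            = (fun σ => if τ = σ then p σ else 0) (e k) := by
        intro k; by_cases h : τ = e k <;> simp [h]
      rw [Finset.sum_congr rfl (fun k _ => this k), Equiv.sum_comp e
        (fun σ => if τ = σ then p σ else 0), Finset.sum_ite_eq]
      simp
    calc ∑ τ : Equiv.Perm (Fin n), |(∑ k, p (e k) * PL (θf (e k)) τ) - p τ|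
        ≤ ∑ τ : Equiv.Perm (Fin n),
            ∑ k, p (e k) * |PL (θf (e k)) τ - (if τ = e k then 1 else 0)| := by
          refine Finset.sum_le_sum fun τ _ => ?_
          rw [hpτ τ, ← Finset.sum_sub_distrib]
          refine (Finset.abs_sum_le_sum_abs _ _).trans ?_
          refine Finset.sum_le_sum fun k _ => ?_
          rw [← mul_sub, abs_mul, abs_of_nonneg (hp _)]
      _ = ∑ k, p (e k) *
            ∑ τ : Equiv.Perm (Fin n), |PL (θf (e k)) τ - (if τ = e k then 1 else 0)| := by
          rw [Finset.sum_comm]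
          simp [Finset.mul_sum]
      _ ≤ ∑ k, p (e k) * (ε/2) := by
          refine Finset.sum_le_sum fun k _ => ?_
          exact mul_le_mul_of_nonneg_left (hθf (e k)).le (hp _)
      _ = ε/2 := by
          rw [← Finset.sum_mul, Equiv.sum_comp e p, hsum, one_mul]
      _ < ε := half_lt_self hε
end
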